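/- Let d ≥ 1 and let I : C²_b(ℝ^d) → C_b(ℝ^d) be Lipschitz with constant K₀ and satisfy the global comparison property. Let x ∈ ℝ^d and let φ ∈ C²_b(ℝ^d) satisfy 0 ≤ φ ≤ 1 and φ(x) = 0. Then for all u, v ∈ C²_b(ℝ^d): | I(φ·u)(x) − I(φ·v)(x) | ≤ K₀ · ‖φ‖_{C²} · sup_{y ∈ spt(φ)} |u(y) − v(y)|, where spt(φ) denotes the support of φ. -/

import Mathlib

/-! Since `φ ≥ 0` and `φ(x) = 0`, with `S = sup_{spt φ} |u - v|` we have `φu ≤ φv + Sφ` everywhere,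
with equality at `x`. The comparison property gives `I(φu)(x) ≤ I(φv + Sφ)(x)`, and the Lipschitz
bound gives `I(φv + Sφ)(x) - I(φv)(x) ≤ K₀ ‖Sφ‖_{C²} = K₀ S ‖φ‖_{C²}`. Exchanging `u` and `v`
bounds the other side. -/

open Metric Set

noncomputable section

abbrev Euc (d : ℕ) := EuclideanSpace ℝ (Fin d)

variable {d : ℕ}

def supNorm (u : Euc d → ℝ) : ℝ := ⨆ x, |u x|

def gradSup (u : Euc d → ℝ) : ℝ := ⨆ x, ‖fderiv ℝ u x‖

def hessSup (u : Euc d → ℝ) : ℝ := ⨆ x, ‖iteratedFDeriv ℝ 2 u x‖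

def C2Norm (u : Euc d → ℝ) : ℝ := supNorm u + gradSup u + hessSup u

def IsC2b (u : Euc d → ℝ) : Prop :=
  ContDiff ℝ 2 u ∧ ∃ M : ℝ, ∀ x, |u x| ≤ M ∧ ‖fderiv ℝ u x‖ ≤ M ∧ ‖iteratedFDeriv ℝ 2 u x‖ ≤ M

def IsCb (f : Euc d → ℝ) : Prop := Continuous f ∧ ∃ M : ℝ, ∀ x, |f x| ≤ M

def GCP (dom : (Euc d → ℝ) → Prop) (I : (Euc d → ℝ) → Euc d → ℝ) : Prop :=
  ∀ u v, dom u → dom v → (∀ y, u y ≤ v y) → ∀ x, u x = v x → I u x ≤ I v x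

def LipWith (K₀ : ℝ) (dom : (Euc d → ℝ) → Prop) (N : (Euc d → ℝ) → ℝ)
    (I : (Euc d → ℝ) → Euc d → ℝ) : Prop :=
  ∀ u v, dom u → dom v → ∀ x, |I u x - I v x| ≤ K₀ * N (fun y => u y - v y)

theorem norm_iteratedFDeriv_mul_le_of_forall_le {𝕜 E A : Type*} [NontriviallyNormedField 𝕜]
    [NormedAddCommGroup E] [NormedSpace 𝕜 E] [NormedRing A] [NormedAlgebra 𝕜 A]
    {f g : E → A} {N : WithTop ℕ∞} {n : ℕ} (hf : ContDiff 𝕜 N f) (hg : ContDiff 𝕜 N g)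
    (hn : n ≤ N) {x : E} {Mf Mg : ℝ} (hMf : ∀ i ≤ n, ‖iteratedFDeriv 𝕜 i f x‖ ≤ Mf)
    (hMg : ∀ i ≤ n, ‖iteratedFDeriv 𝕜 i g x‖ ≤ Mg) :
    ‖iteratedFDeriv 𝕜 n (fun y => f y * g y) x‖ ≤ 2 ^ n * (Mf * Mg) := by
  have hMf0 : 0 ≤ Mf := (norm_nonneg _).trans (hMf 0 n.zero_le)
  calc ‖iteratedFDeriv 𝕜 n (fun y => f y * g y) x‖
      ≤ ∑ i ∈ Finset.range (n + 1),
          (n.choose i : ℝ) * ‖iteratedFDeriv 𝕜 i f x‖ * ‖iteratedFDeriv 𝕜 (n - i) g x‖ :=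
        norm_iteratedFDeriv_mul_le hf hg x hn
    _ ≤ ∑ i ∈ Finset.range (n + 1), (n.choose i : ℝ) * (Mf * Mg) := by
        refine Finset.sum_le_sum fun i hi => ?_
        have hi : i ≤ n := Nat.lt_succ_iff.mp (Finset.mem_range.mp hi)
        rw [mul_assoc]
        gcongr
        · exact hMf i hi
        · exact hMg (n - i) (n.sub_le i)
    _ = 2 ^ n * (Mf * Mg) := by
        rw [← Finset.sum_mul, ← Nat.cast_sum, Nat.sum_range_choose, Nat.cast_pow, Nat.cast_two]

theorem isC2b_iff {u : Euc d → ℝ} :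
    IsC2b u ↔ ContDiff ℝ 2 u ∧ ∃ M : ℝ, ∀ k ≤ 2, ∀ x, ‖iteratedFDeriv ℝ k u x‖ ≤ M := by
  refine and_congr_right fun _ => exists_congr fun M => ⟨fun h k hk x => ?_, fun h x => ?_⟩
  · interval_cases k
    · simpa [norm_iteratedFDeriv_zero] using (h x).1
    · simpa [norm_iteratedFDeriv_one] using (h x).2.1
    · exact (h x).2.2
  · refine ⟨?_, ?_, h 2 le_rfl x⟩
    · simpa [norm_iteratedFDeriv_zero] using h 0 (by norm_num) x
    · simpa [norm_iteratedFDeriv_one] using h 1 (by norm_num) x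

theorem isC2b_const (c : ℝ) : IsC2b (d := d) fun _ => c := by
  refine isC2b_iff.mpr ⟨contDiff_const, |c|, fun k _ x => ?_⟩
  rcases Nat.eq_zero_or_pos k with rfl | hk
  · simp [norm_iteratedFDeriv_zero]
  · simp [iteratedFDeriv_const_of_ne hk.ne']

theorem IsC2b.add {f g : Euc d → ℝ} (hf : IsC2b f) (hg : IsC2b g) :
    IsC2b fun y => f y + g y := by
  obtain ⟨hf, Mf, hMf⟩ := isC2b_iff.mp hf
  obtain ⟨hg, Mg, hMg⟩ := isC2b_iff.mp hg
  refine isC2b_iff.mpr ⟨hf.add hg, Mf + Mg, fun k hk x => ?_⟩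
  rw [fun_iteratedFDeriv_add_apply ((hf.of_le (by exact_mod_cast hk)).contDiffAt)
    ((hg.of_le (by exact_mod_cast hk)).contDiffAt)]
  exact (norm_add_le _ _).trans (add_le_add (hMf k hk x) (hMg k hk x))

theorem IsC2b.mul {f g : Euc d → ℝ} (hf : IsC2b f) (hg : IsC2b g) :
    IsC2b fun y => f y * g y := by
  obtain ⟨hf, Mf, hMf⟩ := isC2b_iff.mp hf
  obtain ⟨hg, Mg, hMg⟩ := isC2b_iff.mp hg
  refine isC2b_iff.mpr ⟨hf.mul hg, 2 ^ 2 * (Mf * Mg), fun k hk x => ?_⟩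
  have hMf0 : 0 ≤ Mf := (norm_nonneg _).trans (hMf 0 (by norm_num) x)
  have hMg0 : 0 ≤ Mg := (norm_nonneg _).trans (hMg 0 (by norm_num) x)
  calc ‖iteratedFDeriv ℝ k (fun y => f y * g y) x‖ ≤ 2 ^ k * (Mf * Mg) :=
        norm_iteratedFDeriv_mul_le_of_forall_le hf hg (by exact_mod_cast hk)
          (fun i hi => hMf i (hi.trans hk) x) (fun i hi => hMg i (hi.trans hk) x)
    _ ≤ 2 ^ 2 * (Mf * Mg) := by gcongr; norm_num

theorem C2Norm_const_mul {φ : Euc d → ℝ} (hφ : ContDiff ℝ 2 φ) {c : ℝ} (hc : 0 ≤ c) :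
    C2Norm (fun y => c * φ y) = c * C2Norm φ := by
  have h0 : ∀ y, |c * φ y| = c * |φ y| := fun y => by rw [abs_mul, abs_of_nonneg hc]
  have h1 : ∀ y, ‖fderiv ℝ (fun y => c * φ y) y‖ = c * ‖fderiv ℝ φ y‖ := fun y => by
    rw [fderiv_const_mul ((hφ.differentiable two_ne_zero).differentiableAt), norm_smul,
      Real.norm_eq_abs, abs_of_nonneg hc]
  have h2 : ∀ y, ‖iteratedFDeriv ℝ 2 (fun y => c * φ y) y‖ = c * ‖iteratedFDeriv ℝ 2 φ y‖ :=
    fun y => by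
      change ‖iteratedFDeriv ℝ 2 (fun y => c • φ y) y‖ = _
      rw [iteratedFDeriv_const_smul_apply' hφ.contDiffAt, norm_smul,
        Real.norm_eq_abs, abs_of_nonneg hc]
  simp only [C2Norm, supNorm, gradSup, hessSup, h0, h1, h2, mul_add, Real.mul_iSup_of_nonneg hc]

theorem GCP.apply_mul_sub_apply_mul_le {K₀ : ℝ} {I : (Euc d → ℝ) → Euc d → ℝ}
    (hGCP : GCP IsC2b I) (hLip : LipWith K₀ IsC2b C2Norm I) {x : Euc d} {φ u v : Euc d → ℝ}
    (hφ : IsC2b φ) (hφ0 : ∀ y, 0 ≤ φ y) (hφx : φ x = 0) (hu : IsC2b u) (hv : IsC2b v)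
    {S : ℝ} (hS0 : 0 ≤ S) (hS : ∀ y, φ y ≠ 0 → u y - v y ≤ S) :
    I (fun y => φ y * u y) x - I (fun y => φ y * v y) x ≤ K₀ * C2Norm φ * S := by
  have hφv := hφ.mul hv
  have hw : IsC2b fun y => φ y * v y + S * φ y := hφv.add ((isC2b_const S).mul hφ)
  have hle : ∀ y, φ y * u y ≤ φ y * v y + S * φ y := fun y => by
    by_cases hy : φ y = 0
    · simp [hy]
    · nlinarith [hS y hy, hφ0 y]
  have hcomp : I (fun y => φ y * u y) x ≤ I (fun y => φ y * v y + S * φ y) x :=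
    hGCP _ _ (hφ.mul hu) hw hle x (by simp [hφx])
  have hlip := (le_abs_self _).trans (hLip _ _ hw hφv x)
  simp only [add_sub_cancel_left, C2Norm_const_mul hφ.1 hS0] at hlip
  linarith

theorem le_biSup_of_bddAbove {α : Type*} {g : α → ℝ} (hg : BddAbove (range g)) {s : Set α}
    {y : α} (hy : y ∈ s) : g y ≤ ⨆ z ∈ s, g z := by
  obtain ⟨M, hM⟩ := hg
  rw [← ciSup_pos (f := fun _ : y ∈ s => g y) hy]
  refine le_ciSup (f := fun z => ⨆ _ : z ∈ s, g z) ⟨max M 0, ?_⟩ y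
  rintro _ ⟨z, rfl⟩
  exact Real.iSup_le (fun _ => (hM ⟨z, rfl⟩).trans (le_max_left _ _)) (le_max_right _ _)

theorem localized_estimate_general (d : ℕ) (K₀ : ℝ)
    (I : (Euc d → ℝ) → Euc d → ℝ)
    (hLip : LipWith K₀ IsC2b C2Norm I)
    (hGCP : GCP IsC2b I)
    (x : Euc d) (φ : Euc d → ℝ) (hφ : IsC2b φ)
    (hφ01 : ∀ y, 0 ≤ φ y ∧ φ y ≤ 1) (hφx : φ x = 0)
    (u v : Euc d → ℝ) (hu : IsC2b u) (hv : IsC2b v) :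
    |I (fun y => φ y * u y) x - I (fun y => φ y * v y) x| ≤
      K₀ * C2Norm φ * (⨆ y ∈ Function.support φ, |u y - v y|) := by
  set S := ⨆ y ∈ Function.support φ, |u y - v y|
  have hS0 : 0 ≤ S := Real.iSup_nonneg fun _ => Real.iSup_nonneg fun _ => abs_nonneg _
  obtain ⟨-, Mu, hMu⟩ := id hu
  obtain ⟨-, Mv, hMv⟩ := id hv
  have hbdd : BddAbove (range fun y => |u y - v y|) :=
    ⟨Mu + Mv, by rintro _ ⟨y, rfl⟩; exact (abs_sub _ _).trans (add_le_add (hMu y).1 (hMv y).1)⟩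
  have hS : ∀ y, φ y ≠ 0 → |u y - v y| ≤ S := fun y hy => le_biSup_of_bddAbove hbdd hy
  have hφ0 : ∀ y, 0 ≤ φ y := fun y => (hφ01 y).1
  rw [abs_sub_le_iff]
  exact ⟨hGCP.apply_mul_sub_apply_mul_le hLip hφ hφ0 hφx hu hv hS0
      fun y hy => (le_abs_self _).trans (hS y hy),
    hGCP.apply_mul_sub_apply_mul_le hLip hφ hφ0 hφx hv hu hS0
      fun y hy => (le_abs_self _).trans (abs_sub_comm (u y) (v y) ▸ hS y hy)⟩

/-- localized Lipschitz estimate for operators with the GCP, tested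
against a cutoff `φ` vanishing at `x`:
`|I(φu)(x) - I(φv)(x)| ≤ K₀ ‖φ‖_{C²} sup_{spt φ} |u - v|`. -/
theorem localized_estimate (d : ℕ) (hd : 1 ≤ d) (K₀ : ℝ) (hK₀ : 0 ≤ K₀)
    (I : (Euc d → ℝ) → Euc d → ℝ)
    (hmap : ∀ u, IsC2b u → IsCb (I u))
    (hLip : LipWith K₀ IsC2b C2Norm I)
    (hGCP : GCP IsC2b I)
    (x : Euc d) (φ : Euc d → ℝ) (hφ : IsC2b φ)
    (hφ01 : ∀ y, 0 ≤ φ y ∧ φ y ≤ 1) (hφx : φ x = 0)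
    (u v : Euc d → ℝ) (hu : IsC2b u) (hv : IsC2b v) :
    |I (fun y => φ y * u y) x - I (fun y => φ y * v y) x| ≤
      K₀ * C2Norm φ * (⨆ y ∈ Function.support φ, |u y - v y|) :=
  localized_estimate_general d K₀ I hLip hGCP x φ hφ hφ01 hφx u v hu hv

end
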